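/- Let G be a graph of girth at least five. For any r ≥ 2, if G admits a weak r-guidance system of maximum outdegree at most c, then G admits an r-guidance system of maximum outdegree at most 3c. -/
import Mathlib


open SimpleGraph

variable {V : Type*}

/-- `H` is a partial orientation of `G`: every directed edge of `H` projects to an edge of `G`. -/
def IsPartialOrientation (G : SimpleGraph V) (H : V → V → Prop) : Prop :=
  ∀ ⦃u v⦄, H u v → G.Adj u v

/-- `oball H v a` is the set of vertices reachable from `v` in `H` by a directed path
of length at most `a`. -/
def oball (H : V → V → Prop) (v : V) : ℕ → Set V
  | 0 => {v}
  | a + 1 => oball H v a ∪ {w | ∃ x ∈ oball H v a, H x w}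

/-- `gate G u v` is the set of neighbors of `u` at distance `dist u v - 1` from `v`,
i.e. the possible second vertices of shortest `u`-`v` paths. -/
def gate (G : SimpleGraph V) (u v : V) : Set V :=
  {y | G.Adj u y ∧ G.dist y v = G.dist u v - 1}

/-- `H` is a weak `r`-guidance system of `G`: for distinct `u,v` at distance `ℓ ≤ r`
there are `a + b = ℓ - 1` and an edge of `G` between `oball H u a` and `oball H v b`. -/
def IsWeakGuidance (G : SimpleGraph V) (H : V → V → Prop) (r : ℕ) : Prop :=
  ∀ u v : V, u ≠ v → G.Reachable u v → G.dist u v ≤ r →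
    ∃ a b : ℕ, a + b = G.dist u v - 1 ∧ ∃ x ∈ oball H u a, ∃ y ∈ oball H v b, G.Adj x y

/-- Gate formulation of weak `r`-guidance systems: for `u,v` at distance `ℓ` with
`2 ≤ ℓ ≤ r`, `u` has an outneighbor in `gate G u v` or `v` has one in `gate G v u`. -/
def IsWeakGuidanceGate (G : SimpleGraph V) (H : V → V → Prop) (r : ℕ) : Prop :=
  ∀ u v : V, 2 ≤ G.dist u v → G.dist u v ≤ r →
    (∃ y ∈ gate G u v, H u y) ∨ (∃ y ∈ gate G v u, H v y)

/-- The outdegree of `u` in the partial orientation `H`. -/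
noncomputable def outdeg (H : V → V → Prop) (u : V) : ℕ := {v | H u v}.ncard

/-- `H` is an `r`-guidance system of `G`. -/
def IsGuidance (G : SimpleGraph V) (H : V → V → Prop) (r : ℕ) : Prop :=
  (∀ u v : V, G.Adj u v → H u v ∨ H v u) ∧
  ∀ u v : V, G.Reachable u v → G.dist u v ≤ r →
    ∃ a b : ℕ, a + b = G.dist u v ∧ (oball H u a ∩ oball H v b).Nonempty

section Aux

open scoped Classical

variable {G : SimpleGraph V}

private lemma girth_le_of_cycle' {a : V} {w : G.Walk a a} (hw : w.IsCycle) :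
    G.girth ≤ w.length := by
  have h1 : G.egirth ≤ (w.length : ℕ∞) :=
    iInf_le_of_le a (iInf_le_of_le w (iInf_le _ hw))
  have := ENat.toNat_le_toNat h1 (by simp)
  simpa [SimpleGraph.girth] using this

private lemma cycle3' {u v w : V} (h1 : G.Adj u v) (h2 : G.Adj v w) (h3 : G.Adj w u) :
    G.girth ≤ 3 := by
  have hc : (Walk.cons h1 (Walk.cons h2 (Walk.cons h3 Walk.nil))).IsCycle := by
    simp [Walk.isCycle_def, Walk.isTrail_def, h1.ne, h2.ne, h3.ne, h1.ne', h2.ne', h3.ne',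
      Sym2.eq, Sym2.rel_iff', List.Nodup]
  simpa using girth_le_of_cycle' hc

private lemma cycle4' {u y v w : V} (huv : u ≠ v) (hyw : y ≠ w)
    (h1 : G.Adj u y) (h2 : G.Adj y v) (h3 : G.Adj v w) (h4 : G.Adj w u) :
    G.girth ≤ 4 := by
  have hc : (Walk.cons h1 (Walk.cons h2 (Walk.cons h3 (Walk.cons h4 Walk.nil)))).IsCycle := by
    simp [Walk.isCycle_def, Walk.isTrail_def, h1.ne, h2.ne, h3.ne, h4.ne,
      h1.ne', h2.ne', h3.ne', h4.ne', huv, hyw, huv.symm, hyw.symm,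
      Sym2.eq, Sym2.rel_iff', List.Nodup]
  simpa using girth_le_of_cycle' hc

private lemma key_claim (hgirth : 5 ≤ G.girth) {r : ℕ} (hr : 2 ≤ r) {H : V → V → Prop}
    (hw : IsWeakGuidanceGate G H r) {w u v : V} (huv : u ≠ v)
    (hu : G.Adj w u) (hv : G.Adj w v) : H u w ∨ H v w := by
  have hA : ¬ G.Adj u v := fun h => by
    have := cycle3' h hv.symm hu; omega
  have hd2 : G.dist u v = 2 := by
    have hle : G.dist u v ≤ 2 := by
      simpa using SimpleGraph.dist_le (Walk.cons hu.symm (Walk.cons hv Walk.nil))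
    have hne0 : G.dist u v ≠ 0 := by
      intro h0
      rcases SimpleGraph.dist_eq_zero_iff_eq_or_not_reachable.mp h0 with h | h
      · exact huv h
      · exact h (Walk.cons hu.symm (Walk.cons hv Walk.nil)).reachable
    have hne1 : G.dist u v ≠ 1 := fun h1 => hA (SimpleGraph.dist_eq_one_iff_adj.mp h1)
    omega
  rcases hw u v (by omega) (by omega) with ⟨y, ⟨hadj, hdy⟩, hH⟩ | ⟨y, ⟨hadj, hdy⟩, hH⟩
  · rw [hd2] at hdy
    have hyv : G.Adj y v := SimpleGraph.dist_eq_one_iff_adj.mp hdy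
    by_cases hyw : y = w
    · left; rwa [hyw] at hH
    · exact absurd (cycle4' huv hyw hadj hyv hv.symm hu) (by omega)
  · have hvu : G.dist v u = 2 := by rw [SimpleGraph.dist_comm]; exact hd2
    rw [hvu] at hdy
    have hyu : G.Adj y u := SimpleGraph.dist_eq_one_iff_adj.mp hdy
    by_cases hyw : y = w
    · right; rwa [hyw] at hH
    · exact absurd (cycle4' huv.symm hyw hadj hyu hu.symm hv) (by omega)

private lemma mindeg' [Fintype V] {H : V → V → Prop} {c : ℕ}
    (hkey : ∀ ⦃w u v : V⦄, u ≠ v → G.Adj w u → G.Adj w v → H u w ∨ H v w)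
    (hout : ∀ u, outdeg H u ≤ c) :
    ∀ S : Finset V, S.Nonempty → ∃ w ∈ S, (S.filter (G.Adj w)).card ≤ c + 1 := by
  intro S hS
  by_contra hcon
  push_neg at hcon
  have hstep : ∀ w ∈ S, (S.filter (G.Adj w)).card ≤
      (S.filter (fun u => G.Adj u w ∧ H u w)).card + 1 := by
    intro w _
    have hsub : S.filter (G.Adj w) ⊆
        S.filter (fun u => G.Adj u w ∧ H u w) ∪ S.filter (fun u => G.Adj w u ∧ ¬ H u w) := by
      intro u hu
      rw [Finset.mem_filter] at hu
      by_cases h : H u w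
      · exact Finset.mem_union_left _ (Finset.mem_filter.mpr ⟨hu.1, hu.2.symm, h⟩)
      · exact Finset.mem_union_right _ (Finset.mem_filter.mpr ⟨hu.1, hu.2, h⟩)
    have hone : (S.filter (fun u => G.Adj w u ∧ ¬ H u w)).card ≤ 1 := by
      rw [Finset.card_le_one]
      intro a ha b hb
      rw [Finset.mem_filter] at ha hb
      by_contra hab
      rcases hkey hab ha.2.1 hb.2.1 with h | h
      · exact ha.2.2 h
      · exact hb.2.2 h
    calc (S.filter (G.Adj w)).card ≤ _ := Finset.card_le_card hsub
      _ ≤ _ + _ := Finset.card_union_le _ _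
      _ ≤ _ + 1 := by omega
  have hsum1 : S.card * (c + 2) ≤ ∑ w ∈ S, (S.filter (G.Adj w)).card := by
    rw [Finset.card_eq_sum_ones, Finset.sum_mul, one_mul]
    exact Finset.sum_le_sum (fun w hw => hcon w hw)
  have hsum2 : ∑ w ∈ S, (S.filter (fun u => G.Adj u w ∧ H u w)).card
      = ∑ u ∈ S, (S.filter (fun w => G.Adj u w ∧ H u w)).card := by
    simp only [Finset.card_filter]
    exact Finset.sum_comm
  have hsum3 : ∀ u ∈ S, (S.filter (fun w => G.Adj u w ∧ H u w)).card ≤ c := by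
    intro u _
    refine le_trans ?_ (hout u)
    rw [outdeg, ← Set.ncard_coe_finset]
    apply Set.ncard_le_ncard _ (Set.toFinite _)
    intro w hw
    simp only [Finset.coe_filter, Set.mem_setOf_eq] at hw ⊢
    exact hw.2.2
  have hmain : S.card * (c + 2) ≤ S.card * c + S.card := by
    calc S.card * (c+2) ≤ ∑ w ∈ S, (S.filter (G.Adj w)).card := hsum1
      _ ≤ ∑ w ∈ S, ((S.filter (fun u => G.Adj u w ∧ H u w)).card + 1) :=
          Finset.sum_le_sum hstep
      _ = (∑ u ∈ S, (S.filter (fun w => G.Adj u w ∧ H u w)).card) + S.card := by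
          rw [Finset.sum_add_distrib, hsum2]; simp
      _ ≤ S.card * c + S.card := by
          have := Finset.sum_le_sum hsum3
          simp only [Finset.sum_const, smul_eq_mul] at this
          omega
  have hpos : 0 < S.card := Finset.card_pos.mpr hS
  nlinarith

private lemma exists_orient' [Fintype V] (G : SimpleGraph V) (t : ℕ)
    (hmin : ∀ S : Finset V, S.Nonempty → ∃ w ∈ S, (S.filter (G.Adj w)).card ≤ t) :
    ∃ D : V → V → Prop,
      (∀ u v, G.Adj u v → D u v ∨ D v u) ∧
      (∀ ⦃u v⦄, D u v → G.Adj u v) ∧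
      (∀ u, outdeg D u ≤ t) := by
  suffices h : ∀ S : Finset V, ∃ D : V → V → Prop,
      (∀ u v, u ∈ S → v ∈ S → G.Adj u v → D u v ∨ D v u) ∧
      (∀ ⦃u v⦄, D u v → u ∈ S ∧ G.Adj u v) ∧
      (∀ u, outdeg D u ≤ t) by
    obtain ⟨D, h1, h2, h3⟩ := h Finset.univ
    exact ⟨D, fun u v ha => h1 u v (Finset.mem_univ u) (Finset.mem_univ v) ha,
      fun u v hd => (h2 hd).2, h3⟩
  intro S
  induction S using Finset.strongInduction with
  | _ S ih =>
    rcases S.eq_empty_or_nonempty with rfl | hne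
    · refine ⟨fun _ _ => False, by simp, by simp, fun u => ?_⟩
      simp [outdeg]
    · obtain ⟨w, hwS, hdeg⟩ := hmin S hne
      obtain ⟨D, hD1, hD2, hD3⟩ := ih (S.erase w) (Finset.erase_ssubset hwS)
      refine ⟨fun a b => D a b ∨ (a = w ∧ b ∈ S ∧ G.Adj w b), ?_, ?_, ?_⟩
      · intro u v huS hvS hadj
        by_cases hu : u = w
        · exact Or.inl (Or.inr ⟨hu, hvS, hu ▸ hadj⟩)
        · by_cases hv : v = w
          · exact Or.inr (Or.inr ⟨hv, huS, hv ▸ hadj.symm⟩)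
          · rcases hD1 u v (Finset.mem_erase.mpr ⟨hu, huS⟩) (Finset.mem_erase.mpr ⟨hv, hvS⟩)
              hadj with h | h
            · exact Or.inl (Or.inl h)
            · exact Or.inr (Or.inl h)
      · rintro u v (h | ⟨rfl, hvS, hadj⟩)
        · exact ⟨Finset.mem_of_mem_erase (hD2 h).1, (hD2 h).2⟩
        · exact ⟨hwS, hadj⟩
      · intro u
        by_cases hu : u = w
        · subst hu
          have hset : {v | D u v ∨ (u = u ∧ v ∈ S ∧ G.Adj u v)} = ↑(S.filter (G.Adj u)) := by
            ext v
            simp only [Set.mem_setOf_eq, Finset.coe_filter, true_and]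
            constructor
            · rintro (h | ⟨hvS, hadj⟩)
              · exact absurd (hD2 h).1 (by simp)
              · exact ⟨hvS, hadj⟩
            · exact fun h => Or.inr h
          rw [outdeg, hset, Set.ncard_coe_finset]
          exact hdeg
        · have hset : {v | D u v ∨ (u = w ∧ v ∈ S ∧ G.Adj w v)} = {v | D u v} := by
            ext v; simp [hu]
          rw [outdeg, hset]
          exact hD3 u

private lemma oball_mono_radius (H : V → V → Prop) (v : V) (a : ℕ) :
    oball H v a ⊆ oball H v (a + 1) := Set.subset_union_left

private lemma mem_oball_self (H : V → V → Prop) (v : V) (a : ℕ) : v ∈ oball H v a := by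
  induction a with
  | zero => exact rfl
  | succ a ih => exact Or.inl ih

private lemma oball_step {H : V → V → Prop} {u y : V} (h : H u y) :
    ∀ a, oball H y a ⊆ oball H u (a + 1) := by
  intro a
  induction a with
  | zero =>
    intro x hx
    rcases hx with rfl
    exact Or.inr ⟨u, rfl, h⟩
  | succ a ih =>
    rintro x (hx | ⟨z, hz, hzx⟩)
    · exact oball_mono_radius H u (a + 1) (ih hx)
    · exact Or.inr ⟨z, ih hz, hzx⟩

end Aux

/-- If `G` has girth at least five and admits a weak `r`-guidance system of maximum
outdegree at most `c` (`r ≥ 2`), then `G` admits an `r`-guidance system of maximum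
outdegree at most `3c`. -/
theorem girth_five_weak_to_full {V : Type*} [Fintype V] (G : SimpleGraph V)
    (hgirth : 5 ≤ G.girth) (r c : ℕ) (hr : 2 ≤ r) (H : V → V → Prop)
    (hpo : IsPartialOrientation G H) (hw : IsWeakGuidanceGate G H r)
    (hout : ∀ u, outdeg H u ≤ c) :
    ∃ H' : V → V → Prop, IsPartialOrientation G H' ∧ IsGuidance G H' r ∧
      ∀ u, outdeg H' u ≤ 3 * c := by
  classical
  have hkey : ∀ ⦃w u v : V⦄, u ≠ v → G.Adj w u → G.Adj w v → H u w ∨ H v w :=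
    fun w u v huv hu hv => key_claim hgirth hr hw huv hu hv
  -- c ≥ 1
  have hc1 : 1 ≤ c := by
    have hnac : ¬ G.IsAcyclic := by
      intro h
      rw [← SimpleGraph.girth_eq_zero] at h
      omega
    obtain ⟨a, p, hp, -⟩ := SimpleGraph.exists_girth_eq_length.mpr hnac
    have h3 : 3 ≤ p.length := hp.three_le_length
    -- destructure the first two edges of the cycle
    cases p with
    | nil => simp at h3
    | @cons _ x _ h1 q =>
      cases q with
      | nil => simp at h3
      | @cons _ y _ h2 q' =>
        -- a -h1- x -h2- y ; a ≠ y since the cycle is a trail of length ≥ 3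
        have hne : a ≠ y := by
          rintro rfl
          have hnd := hp.isTrail.edges_nodup
          rw [Walk.edges_cons, Walk.edges_cons, List.nodup_cons] at hnd
          exact hnd.1 (by simp [List.mem_cons, Sym2.eq_swap])
        rcases hkey hne h1.symm h2 with h | h
        · refine le_trans ?_ (hout a)
          rw [outdeg]
          exact (Set.ncard_pos (Set.toFinite _)).mpr ⟨x, h⟩
        · refine le_trans ?_ (hout y)
          rw [outdeg]
          exact (Set.ncard_pos (Set.toFinite _)).mpr ⟨x, h⟩
  obtain ⟨D, hD1, hD2, hD3⟩ := exists_orient' G (c + 1) (mindeg' hkey hout)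
  set H' : V → V → Prop := fun a b => H a b ∨ D a b with hH'
  have hpo' : IsPartialOrientation G H' := by
    rintro u v (h | h)
    · exact hpo h
    · exact hD2 h
  refine ⟨H', hpo', ⟨fun u v hadj => ?_, ?_⟩, fun u => ?_⟩
  · rcases hD1 u v hadj with h | h
    · exact Or.inl (Or.inr h)
    · exact Or.inr (Or.inr h)
  · -- guidance, by strong induction on distance
    have main : ∀ ℓ : ℕ, ∀ u v : V, G.Reachable u v → G.dist u v ≤ r → G.dist u v = ℓ →
        ∃ a b : ℕ, a + b = ℓ ∧ (oball H' u a ∩ oball H' v b).Nonempty := by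
      intro ℓ
      induction ℓ using Nat.strong_induction_on with
      | _ ℓ ih =>
        intro u v hreach hler hdist
        match ℓ, hdist with
        | 0, hdist =>
          have huv : u = v := by
            rcases SimpleGraph.dist_eq_zero_iff_eq_or_not_reachable.mp hdist with h | h
            · exact h
            · exact absurd hreach h
          exact ⟨0, 0, rfl, u, mem_oball_self H' u 0, huv ▸ mem_oball_self H' u 0⟩
        | 1, hdist =>
          have hadj : G.Adj u v := SimpleGraph.dist_eq_one_iff_adj.mp hdist
          rcases hD1 u v hadj with h | h
          · exact ⟨1, 0, rfl, v, Or.inr ⟨u, rfl, Or.inr h⟩, mem_oball_self H' v 0⟩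
          · exact ⟨0, 1, rfl, u, mem_oball_self H' u 0, Or.inr ⟨v, rfl, Or.inr h⟩⟩
        | (ℓ + 2), hdist =>
          rcases hw u v (by omega) (by omega) with ⟨y, ⟨hadj, hdy⟩, hH⟩ | ⟨y, ⟨hadj, hdy⟩, hH⟩
          · rw [hdist] at hdy
            have hreach' : G.Reachable y v := by
              by_contra h
              rw [SimpleGraph.dist_eq_zero_of_not_reachable h] at hdy
              omega
            obtain ⟨a, b, hab, x, hx1, hx2⟩ :=
              ih (ℓ + 1) (by omega) y v hreach' (by omega) (by omega)
            exact ⟨a + 1, b, by omega, x, oball_step (H := H') (Or.inl hH) a hx1, hx2⟩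
          · have hvu : G.dist v u = ℓ + 2 := by rw [SimpleGraph.dist_comm]; exact hdist
            rw [hvu] at hdy
            have hreach' : G.Reachable y u := by
              by_contra h
              rw [SimpleGraph.dist_eq_zero_of_not_reachable h] at hdy
              omega
            obtain ⟨a, b, hab, x, hx1, hx2⟩ :=
              ih (ℓ + 1) (by omega) y u hreach' (by omega) (by omega)
            exact ⟨b, a + 1, by omega, x, hx2, oball_step (H := H') (Or.inl hH) a hx1⟩
    intro u v hreach hler
    exact main (G.dist u v) u v hreach hler rfl
  · -- outdegree bound
    have : {v | H' u v} = {v | H u v} ∪ {v | D u v} := by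
      ext v; simp [hH']
    rw [outdeg, this]
    calc ({v | H u v} ∪ {v | D u v}).ncard
        ≤ {v | H u v}.ncard + {v | D u v}.ncard :=
          Set.ncard_union_le _ _
      _ ≤ c + (c + 1) := Nat.add_le_add (hout u) (hD3 u)
      _ ≤ 3 * c := by omega
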